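/- arXiv:1004.4116 — 4 statements merged into one kernel-verified Lean document; each statement's English description precedes it below -/
import Mathlib

section
/- The Ewens Sampling Formula defines a probability distribution: for any θ > 0 and n ≥ 1, the sum over all (c_1,...,c_n) ∈ ℕ^n with c_1 + 2c_2 + ... + nc_n = n of (n!/θ_(n)) · ∏_{j=1}^n (θ/j)^{c_j} / c_j! equals 1, where θ_(n) = θ(θ+1)...(θ+n-1). -/
open Finset
open scoped Nat

/-! Write `S m` for the total ESF weight `∏ (θ/j)^{c_j}/c_j!` of the vectors `c` of size
`∑ j c_j = m`. Size-biasing gives `m S m = ∑_j ∑_c j c_j w(c)`, and deleting one part of size `j`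
from `c` turns `j c_j w(c)` into `θ w(c')`, so `m S m = θ ∑_{k<m} S k`. Comparing this at `m` and
`m + 1` gives `(m + 1) S (m + 1) = (θ + m) S m`, hence `S m = θ_(m) / m!`, which is the claim. -/

namespace ESF

noncomputable def weight {n : ℕ} (θ : ℝ) (c : Fin n → ℕ) : ℝ :=
  ∏ j : Fin n, (θ / (j.1 + 1)) ^ c j / (c j)!

def size {n : ℕ} (c : Fin n → ℕ) : ℕ :=
  ∑ j : Fin n, (j.1 + 1) * c j

noncomputable def weightSum (θ : ℝ) (n m : ℕ) : ℝ :=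
  ∑' c : Fin n → ℕ, if size c = m then weight θ c else 0

lemma tsum_mul_apply_eq_tsum_add_single {ι R : Type*} [DecidableEq ι] [Semiring R]
    [TopologicalSpace R] (j : ι) (f : (ι → ℕ) → R) :
    ∑' c : ι → ℕ, (c j : R) * f c = ∑' c : ι → ℕ, ((c j : R) + 1) * f (c + Pi.single j 1) := by
  rw [← (add_left_injective (Pi.single j 1 : ι → ℕ)).tsum_eq]
  · simp
  · intro c hc
    have hcj : c j ≠ 0 := fun h => hc (by simp [h])
    refine ⟨c - Pi.single j 1, funext fun k => ?_⟩
    by_cases hk : k = j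
    · subst hk; simp; omega
    · simp [hk]

variable {n : ℕ}

lemma size_add (c d : Fin n → ℕ) : size (c + d) = size c + size d := by
  simp [size, mul_add, sum_add_distrib]

lemma size_single (j : Fin n) : size (Pi.single j 1 : Fin n → ℕ) = j.1 + 1 := by
  simp [size, Pi.single_apply]

lemma le_size (c : Fin n → ℕ) (j : Fin n) : c j ≤ size c :=
  calc c j ≤ (j.1 + 1) * c j := Nat.le_mul_of_pos_left _ j.1.succ_pos
    _ ≤ size c := single_le_sum (f := fun k : Fin n => (k.1 + 1) * c k)
      (fun _ _ => Nat.zero_le _) (mem_univ j)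

lemma summable_ite_size_eq (m : ℕ) (f : (Fin n → ℕ) → ℝ) :
    Summable fun c => if size c = m then f c else 0 := by
  refine summable_of_ne_finset_zero (s := Fintype.piFinset fun _ => range (m + 1)) ?_
  intro c hc
  obtain ⟨j, hj⟩ : ∃ j, m < c j := by simpa [Fintype.mem_piFinset, Nat.lt_succ_iff] using hc
  rw [if_neg]
  have := le_size c j
  omega

lemma weight_add_single (θ : ℝ) (c : Fin n → ℕ) (j : Fin n) :
    weight θ (c + Pi.single j 1) = θ / (j.1 + 1) / (c j + 1) * weight θ c := by
  simp only [weight, Fintype.prod_eq_mul_prod_compl j, Pi.add_apply, Pi.single_eq_same]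
  rw [prod_congr rfl fun k hk => by rw [Pi.single_eq_of_ne (by simpa using hk), add_zero],
    ← mul_assoc]
  congr 1
  rw [pow_succ, Nat.factorial_succ]
  push_cast
  field_simp

lemma size_eq_zero_iff {c : Fin n → ℕ} : size c = 0 ↔ c = 0 := by
  simp [size, funext_iff]

lemma weightSum_zero (θ : ℝ) : weightSum θ n 0 = 1 := by
  simp [weightSum, size_eq_zero_iff, weight]

lemma tsum_size_biased (θ : ℝ) (m : ℕ) (j : Fin n) :
    ∑' c : Fin n → ℕ, (if size c = m then (c j : ℝ) * ((j.1 + 1) * weight θ c) else 0)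
      = if j.1 + 1 ≤ m then θ * weightSum θ n (m - (j.1 + 1)) else 0 := by
  calc _ = ∑' c : Fin n → ℕ, (c j : ℝ) * (if size c = m then (j.1 + 1) * weight θ c else 0) :=
        tsum_congr fun c => by split_ifs <;> simp
    _ = ∑' c : Fin n → ℕ, if size c = m - (j.1 + 1) ∧ j.1 + 1 ≤ m then θ * weight θ c else 0 := by
        rw [tsum_mul_apply_eq_tsum_add_single]
        refine tsum_congr fun c => ?_
        simp only [size_add, size_single, weight_add_single]
        have hcj : (c j : ℝ) + 1 ≠ 0 := by positivity
        split_ifs with h₁ h₂ h₂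
        · field_simp
        · omega
        · omega
        · exact mul_zero _
    _ = _ := by
        split_ifs with hm
        · simp only [hm, and_true, weightSum, ← tsum_mul_left, mul_ite, mul_zero]
        · simp [hm]

lemma natCast_mul_weightSum (θ : ℝ) {m : ℕ} (hm : m ≤ n) :
    (m : ℝ) * weightSum θ n m = θ * ∑ k ∈ range m, weightSum θ n k := by
  calc (m : ℝ) * weightSum θ n m
      = ∑' c : Fin n → ℕ, ∑ j : Fin n,
          (if size c = m then (c j : ℝ) * ((j.1 + 1) * weight θ c) else 0) := by
        rw [weightSum, ← tsum_mul_left]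
        refine tsum_congr fun c => ?_
        split_ifs with h
        · rw [← h, size]
          push_cast
          rw [sum_mul]
          exact sum_congr rfl fun j _ => by ring
        · simp
    _ = ∑ i ∈ range n, if i + 1 ≤ m then θ * weightSum θ n (m - (i + 1)) else 0 := by
        rw [Summable.tsum_finsetSum fun j _ => summable_ite_size_eq m _]
        simp only [tsum_size_biased]
        exact Fin.sum_univ_eq_sum_range
          (fun i => if i + 1 ≤ m then θ * weightSum θ n (m - (i + 1)) else 0) n
    _ = θ * ∑ k ∈ range m, weightSum θ n k := by
        have hfilter : (range n).filter (· + 1 ≤ m) = range m := by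
          ext i; simp; omega
        rw [← sum_filter, hfilter, ← mul_sum, ← sum_range_reflect]
        exact congrArg _ (sum_congr rfl fun i hi => by
          rw [mem_range] at hi
          congr 1
          omega)

lemma succ_mul_weightSum_succ (θ : ℝ) {m : ℕ} (hm : m + 1 ≤ n) :
    ((m : ℝ) + 1) * weightSum θ n (m + 1) = (θ + m) * weightSum θ n m := by
  have h₁ := natCast_mul_weightSum θ hm
  rw [sum_range_succ, mul_add, ← natCast_mul_weightSum θ (by omega : m ≤ n)] at h₁
  push_cast at h₁
  linarith

lemma weightSum_mul_factorial (θ : ℝ) {m : ℕ} (hm : m ≤ n) :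
    weightSum θ n m * m ! = ∏ i ∈ range m, (θ + i) := by
  induction m with
  | zero => simp [weightSum_zero]
  | succ m ih =>
    rw [Nat.factorial_succ, prod_range_succ, ← ih (by omega)]
    push_cast
    linear_combination (m ! : ℝ) * succ_mul_weightSum_succ θ hm

end ESF

theorem esf_sums_to_one_general (θ : ℝ) (hθ : 0 < θ) (n : ℕ) :
    ∑' c : Fin n → ℕ,
      (if (∑ j : Fin n, (j.1 + 1) * c j) = n then
        ((Nat.factorial n : ℝ) / ∏ i ∈ range n, (θ + i)) *
          ∏ j : Fin n, (θ / (j.1 + 1)) ^ c j / (Nat.factorial (c j))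
      else 0) = 1 := by
  have hS : ESF.weightSum θ n n ≠ 0 := by
    refine left_ne_zero_of_mul (b := (n ! : ℝ)) ?_
    rw [ESF.weightSum_mul_factorial θ le_rfl]
    exact (prod_pos fun i _ => by positivity).ne'
  calc _ = ((n ! : ℝ) / ∏ i ∈ range n, (θ + i)) * ESF.weightSum θ n n := by
        rw [ESF.weightSum, ← tsum_mul_left]
        exact tsum_congr fun c => by rw [mul_ite, mul_zero]; rfl
    _ = 1 := by
        rw [← ESF.weightSum_mul_factorial θ le_rfl]
        field_simp

/-- The Ewens Sampling Formula defines a probability distribution: for θ > 0 and n ≥ 1,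
the ESF(θ) weights sum to 1 over all allele-count vectors `(c_1, …, c_n)` with
`∑ j·c_j = n`. Here `c : Fin n → ℕ`, with `c j` the number of types represented `j+1` times. -/
theorem esf_sums_to_one (θ : ℝ) (hθ : 0 < θ) (n : ℕ) (hn : 1 ≤ n) :
    ∑' c : Fin n → ℕ,
      (if (∑ j : Fin n, (j.1 + 1) * c j) = n then
        ((Nat.factorial n : ℝ) / ∏ i ∈ range n, (θ + i)) *
          ∏ j : Fin n, (θ / (j.1 + 1)) ^ c j / (Nat.factorial (c j))
      else 0) = 1 :=
  esf_sums_to_one_general θ hθ n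
end

section
/- Under the Ewens Sampling Formula ESF(θ), the number of distinct types K_n is a sufficient statistic for θ: the conditional distribution of (C_1,...,C_n) given K_n = k does not depend on θ. Explicitly, P[K_n = k] = |s(n,k)| θ^k / θ_(n), with |s(n,k)| the unsigned Stirling number of the first kind, and P[C = c | K_n = k] = (n! / |s(n,k)|) ∏_{j=1}^n (1/j)^{c_j} / c_j! for any c with ∑ j·c_j = n and ∑ c_j = k. -/
open Finset

/-- Unsigned Stirling numbers of the first kind: `|s(n,k)|`, satisfying
`θ_(n) = ∑_k |s(n,k)| θ^k`, with recurrence `|s(n+1,k+1)| = n·|s(n,k+1)| + |s(n,k)|`. -/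
def stirling1 : ℕ → ℕ → ℕ
  | 0, 0 => 1
  | 0, _ + 1 => 0
  | _ + 1, 0 => 0
  | n + 1, k + 1 => n * stirling1 n (k + 1) + stirling1 n k


lemma box_mem {N n : ℕ} {c : Fin N → ℕ} (h : (∑ j : Fin N, (j.1 + 1) * c j) = n) :
    c ∈ Fintype.piFinset (fun _ : Fin N => Finset.range (n+1)) := by
  rw [Fintype.mem_piFinset]
  intro j
  rw [Finset.mem_range]
  have h1 : (j.1 + 1) * c j ≤ n := h ▸ Finset.single_le_sum
    (f := fun j : Fin N => (j.1 + 1) * c j) (fun _ _ => Nat.zero_le _) (Finset.mem_univ j)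
  have h2 : c j ≤ (j.1 + 1) * c j := Nat.le_mul_of_pos_left _ (Nat.succ_pos _)
  omega

lemma summable_ite {N n k : ℕ} (v : (Fin N → ℕ) → ℝ) :
    Summable (fun c : Fin N → ℕ =>
      if (∑ j : Fin N, (j.1 + 1) * c j) = n ∧ (∑ j : Fin N, c j) = k then v c else 0) := by
  apply summable_of_ne_finset_zero (s := Fintype.piFinset fun _ : Fin N => Finset.range (n+1))
  intro c hc
  rw [if_neg]
  exact fun h => hc (box_mem h.1)

noncomputable def u (N : ℕ) (c : Fin N → ℕ) : ℝ :=
  ∏ j : Fin N, (1 / (j.1 + 1 : ℝ)) ^ c j / (Nat.factorial (c j))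

noncomputable def T (N n k : ℕ) : ℝ :=
  ∑' c : Fin N → ℕ,
    if (∑ j : Fin N, (j.1 + 1) * c j) = n ∧ (∑ j : Fin N, c j) = k then u N c else 0

lemma pad_sum {M : Type*} [AddCommMonoid M] {m N : ℕ} (h : m ≤ N) (e : ℕ → ℕ)
    (F : ℕ → ℕ → M) (hF : ∀ t, F t 0 = 0) (he : ∀ t, m ≤ t → e t = 0) :
    ∑ j : Fin N, F j.1 (e j.1) = ∑ j : Fin m, F j.1 (e j.1) := by
  rw [Fin.sum_univ_eq_sum_range (fun t => F t (e t)), Fin.sum_univ_eq_sum_range (fun t => F t (e t))]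
  refine (Finset.sum_subset (Finset.range_subset_range.mpr h) ?_).symm
  intro t ht hmt
  rw [he t (by simpa using hmt), hF]

lemma pad_prod {M : Type*} [CommMonoid M] {m N : ℕ} (h : m ≤ N) (e : ℕ → ℕ)
    (F : ℕ → ℕ → M) (hF : ∀ t, F t 0 = 1) (he : ∀ t, m ≤ t → e t = 0) :
    ∏ j : Fin N, F j.1 (e j.1) = ∏ j : Fin m, F j.1 (e j.1) := by
  rw [Fin.prod_univ_eq_prod_range (fun t => F t (e t)), Fin.prod_univ_eq_prod_range (fun t => F t (e t))]
  refine (Finset.prod_subset (Finset.range_subset_range.mpr h) ?_).symm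
  intro t ht hmt
  rw [he t (by simpa using hmt), hF]

def extz (m : ℕ) (d : Fin m → ℕ) : ℕ → ℕ := fun t => if h : t < m then d ⟨t, h⟩ else 0

lemma extz_lt {m : ℕ} (d : Fin m → ℕ) (j : Fin m) : extz m d j.1 = d j := by
  simp [extz, j.2]

lemma extz_ge {m : ℕ} (d : Fin m → ℕ) {t : ℕ} (h : m ≤ t) : extz m d t = 0 := by
  simp [extz, Nat.not_lt.mpr h]

lemma T_pad {m N k : ℕ} (h : m ≤ N) : T N m k = T m m k := by
  unfold T
  set f : (Fin N → ℕ) → ℝ := fun c =>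
    if (∑ j : Fin N, (j.1 + 1) * c j) = m ∧ (∑ j : Fin N, c j) = k then u N c else 0 with hf
  set g : (Fin m → ℕ) → (Fin N → ℕ) := fun d => fun j : Fin N => extz m d j.1 with hg
  have hinj : Function.Injective g := by
    intro d d' hdd
    funext j
    have := congrFun hdd ⟨j.1, lt_of_lt_of_le j.2 h⟩
    simpa [hg, extz, j.2] using this
  have hsupp : Function.support f ⊆ Set.range g := by
    intro c hc
    rw [Function.mem_support, hf] at hc
    by_cases hcond : (∑ j : Fin N, (j.1 + 1) * c j) = m ∧ (∑ j : Fin N, c j) = k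
    · -- c vanishes above m
      have hzero : ∀ j : Fin N, m ≤ j.1 → c j = 0 := by
        intro j hj
        by_contra hne
        have h1 : (j.1 + 1) * c j ≤ m := hcond.1 ▸ Finset.single_le_sum
          (f := fun j : Fin N => (j.1 + 1) * c j) (fun _ _ => Nat.zero_le _) (Finset.mem_univ j)
        have : m + 1 ≤ (j.1 + 1) * c j := by
          calc m + 1 ≤ j.1 + 1 := by omega
          _ ≤ (j.1 + 1) * c j := Nat.le_mul_of_pos_right _ (Nat.pos_of_ne_zero hne)
        omega
      refine ⟨fun j => c ⟨j.1, lt_of_lt_of_le j.2 h⟩, ?_⟩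
      funext j
      by_cases hj : j.1 < m
      · simp [hg, extz, hj]
      · simp [hg, extz, hj, hzero j (Nat.not_lt.mp hj)]
    · exact absurd (if_neg hcond) hc
  rw [← Function.Injective.tsum_eq hinj hsupp]
  apply tsum_congr
  intro d
  have h1 : (∑ j : Fin N, (j.1 + 1) * g d j) = ∑ j : Fin m, (j.1 + 1) * d j := by
    rw [pad_sum h (extz m d) (fun t a => (t + 1) * a) (fun t => by ring) (fun t ht => extz_ge d ht)]
    exact Finset.sum_congr rfl fun j _ => by rw [extz_lt]
  have h2 : (∑ j : Fin N, g d j) = ∑ j : Fin m, d j := by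
    rw [pad_sum h (extz m d) (fun _ a => a) (fun t => rfl) (fun t ht => extz_ge d ht)]
    exact Finset.sum_congr rfl fun j _ => by rw [extz_lt]
  have h3 : u N (g d) = u m d := by
    unfold u
    rw [pad_prod h (extz m d) (fun t a => (1 / (t + 1 : ℝ)) ^ a / (Nat.factorial a))
      (fun t => by simp) (fun t ht => extz_ge d ht)]
    exact Finset.prod_congr rfl fun j _ => by rw [extz_lt]
  rw [hf]
  simp only [h1, h2, h3]

lemma factor_id (a : ℝ) (ha : a ≠ 0) (b : ℕ) :
    (a * (b + 1)) * ((1/a) ^ (b+1) / (Nat.factorial (b+1))) = (1/a) ^ b / (Nat.factorial b) := by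
  rw [pow_succ, Nat.factorial_succ]
  have hb : ((Nat.factorial b : ℝ)) ≠ 0 := Nat.cast_ne_zero.mpr (Nat.factorial_ne_zero b)
  push_cast
  field_simp

lemma esf_inner_sum (n k : ℕ) (j : Fin (n+1)) :
    (∑' c : Fin (n+1) → ℕ,
      if (∑ t : Fin (n+1), (t.1 + 1) * c t) = n+1 ∧ (∑ t : Fin (n+1), c t) = k+1 then
        (((j.1 + 1) * c j : ℕ) : ℝ) * u (n+1) c else 0)
      = T (n+1) (n - j.1) k := by
  set f : (Fin (n+1) → ℕ) → ℝ := fun c =>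
    if (∑ t : Fin (n+1), (t.1 + 1) * c t) = n+1 ∧ (∑ t : Fin (n+1), c t) = k+1 then
      (((j.1 + 1) * c j : ℕ) : ℝ) * u (n+1) c else 0 with hf
  set g : (Fin (n+1) → ℕ) → (Fin (n+1) → ℕ) := fun d t => d t + (if t = j then 1 else 0) with hg
  have hinj : Function.Injective g := by
    intro d d' hdd
    funext t
    have := congrFun hdd t
    simp only [hg] at this
    omega
  have hsupp : Function.support f ⊆ Set.range g := by
    intro c hc
    rw [Function.mem_support, hf] at hc
    have hcj : c j ≠ 0 := fun h0 => hc (by simp [h0])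
    refine ⟨fun t => c t - (if t = j then 1 else 0), ?_⟩
    funext t
    simp only [hg]
    by_cases ht : t = j
    · subst ht; simp; omega
    · simp [ht]
  rw [← Function.Injective.tsum_eq hinj hsupp]
  unfold T
  apply tsum_congr
  intro d
  have hwt : (∑ t : Fin (n+1), (t.1 + 1) * g d t)
      = (∑ t : Fin (n+1), (t.1 + 1) * d t) + (j.1 + 1) := by
    simp only [hg, mul_add, mul_ite, mul_one, mul_zero, Finset.sum_add_distrib,
      Finset.sum_ite_eq' univ j (fun t : Fin (n+1) => t.1 + 1), Finset.mem_univ, if_pos]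
  have hsz : (∑ t : Fin (n+1), g d t) = (∑ t : Fin (n+1), d t) + 1 := by
    simp only [hg, Finset.sum_add_distrib,
      Finset.sum_ite_eq' univ j (fun _ : Fin (n+1) => 1), Finset.mem_univ, if_pos]
  have hj : j.1 ≤ n := Nat.lt_succ_iff.mp j.2
  have hcond_iff : ((∑ t : Fin (n+1), (t.1 + 1) * g d t) = n+1 ∧ (∑ t : Fin (n+1), g d t) = k+1)
      ↔ ((∑ t : Fin (n+1), (t.1 + 1) * d t) = n - j.1 ∧ (∑ t : Fin (n+1), d t) = k) := by
    rw [hwt, hsz]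
    omega
  show (if (∑ t : Fin (n+1), (t.1 + 1) * g d t) = n+1 ∧ (∑ t : Fin (n+1), g d t) = k+1 then
      (((j.1 + 1) * g d j : ℕ) : ℝ) * u (n+1) (g d) else 0)
    = (if (∑ t : Fin (n+1), (t.1 + 1) * d t) = n - j.1 ∧ (∑ t : Fin (n+1), d t) = k then
      u (n+1) d else 0)
  by_cases hcond : (∑ t : Fin (n+1), (t.1 + 1) * d t) = n - j.1 ∧ (∑ t : Fin (n+1), d t) = k
  · rw [if_pos (hcond_iff.mpr hcond), if_pos hcond]
    have hgdj : g d j = d j + 1 := by simp [hg]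
    have hgupd : g d = Function.update d j (d j + 1) := by
      funext t
      by_cases ht : t = j
      · subst ht; simp [hg]
      · simp [hg, ht, Function.update_of_ne ht]
    have hufun : (fun t : Fin (n+1) => (1 / (t.1 + 1 : ℝ)) ^ (g d t) / (Nat.factorial (g d t)))
        = Function.update (fun t : Fin (n+1) => (1 / (t.1 + 1 : ℝ)) ^ (d t) / (Nat.factorial (d t)))
            j ((1 / (j.1 + 1 : ℝ)) ^ (d j + 1) / (Nat.factorial (d j + 1))) := by
      funext t
      by_cases ht : t = j
      · subst ht; rw [Function.update_self, hgdj]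
      · rw [Function.update_of_ne ht]
        have : g d t = d t := by simp [hg, ht]
        rw [this]
    have hu1 : u (n+1) (g d) = ((1 / (j.1 + 1 : ℝ)) ^ (d j + 1) / (Nat.factorial (d j + 1)))
        * ∏ t ∈ univ \ {j}, (1 / (t.1 + 1 : ℝ)) ^ (d t) / (Nat.factorial (d t)) := by
      unfold u
      rw [hufun]
      exact Finset.prod_update_of_mem (Finset.mem_univ j) _ _
    have hu2 : u (n+1) d = ((1 / (j.1 + 1 : ℝ)) ^ (d j) / (Nat.factorial (d j)))
        * ∏ t ∈ univ \ {j}, (1 / (t.1 + 1 : ℝ)) ^ (d t) / (Nat.factorial (d t)) := by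
      unfold u
      exact Finset.prod_eq_mul_prod_sdiff_singleton_of_mem (Finset.mem_univ j) _
    rw [hu1, hu2, hgdj]
    rw [← mul_assoc]
    congr 1
    have ha : ((j.1 + 1 : ℝ)) ≠ 0 := by positivity
    have := factor_id (j.1 + 1 : ℝ) ha (d j)
    push_cast
    push_cast at this
    linarith [this]
  · rw [if_neg (fun h => hcond (hcond_iff.mp h)), if_neg hcond]

lemma T_rec (n k : ℕ) :
    ((n : ℝ) + 1) * T (n+1) (n+1) (k+1) = ∑ m ∈ Finset.range (n+1), T m m k := by
  conv_lhs => rw [T]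
  rw [← tsum_mul_left]
  have hterm : ∀ c : Fin (n+1) → ℕ,
      ((n:ℝ)+1) * (if (∑ t : Fin (n+1), (t.1+1) * c t) = n+1 ∧ (∑ t : Fin (n+1), c t) = k+1
        then u (n+1) c else 0)
      = ∑ j : Fin (n+1), (if (∑ t : Fin (n+1), (t.1+1) * c t) = n+1 ∧ (∑ t : Fin (n+1), c t) = k+1
          then (((j.1+1) * c j : ℕ) : ℝ) * u (n+1) c else 0) := by
    intro c
    by_cases hcond : (∑ t : Fin (n+1), (t.1+1) * c t) = n+1 ∧ (∑ t : Fin (n+1), c t) = k+1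
    · simp only [if_pos hcond]
      have hcast : ((n:ℝ)+1) = ∑ j : Fin (n+1), (((j.1+1) * c j : ℕ) : ℝ) := by
        rw [← Nat.cast_sum, hcond.1]
        push_cast
        ring
      rw [hcast, Finset.sum_mul]
    · simp [hcond]
  rw [tsum_congr hterm, Summable.tsum_finsetSum (fun j _ => summable_ite _)]
  have hpad : ∀ j : Fin (n+1), (∑' c : Fin (n+1) → ℕ,
      if (∑ t : Fin (n+1), (t.1+1) * c t) = n+1 ∧ (∑ t : Fin (n+1), c t) = k+1
        then (((j.1+1) * c j : ℕ) : ℝ) * u (n+1) c else 0) = T (n - j.1) (n - j.1) k := by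
    intro j
    rw [esf_inner_sum n k j]
    exact T_pad (by omega)
  rw [Finset.sum_congr rfl (fun j _ => hpad j)]
  rw [Fin.sum_univ_eq_sum_range (fun t => T (n-t) (n-t) k) (n+1)]
  rw [← Finset.sum_range_reflect (fun m => T m m k) (n+1)]
  apply Finset.sum_congr rfl
  intro t ht
  have : n + 1 - 1 - t = n - t := by omega
  rw [this]

lemma stirling_id (n k : ℕ) : (stirling1 (n+1) (k+1) : ℝ)
    = ∑ m ∈ Finset.range (n+1), ((Nat.factorial n : ℝ) / (Nat.factorial m)) * stirling1 m k := by
  induction n with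
  | zero => simp [stirling1]
  | succ n ih =>
    rw [Finset.sum_range_succ]
    have hstep : ∀ m : ℕ, ((Nat.factorial (n+1) : ℝ) / (Nat.factorial m))
        = ((n : ℝ) + 1) * ((Nat.factorial n : ℝ) / (Nat.factorial m)) := by
      intro m
      rw [Nat.factorial_succ]
      push_cast
      ring
    have : ∑ m ∈ Finset.range (n+1), ((Nat.factorial (n+1) : ℝ) / (Nat.factorial m)) * stirling1 m k
        = ((n : ℝ) + 1) * ∑ m ∈ Finset.range (n+1), ((Nat.factorial n : ℝ) / (Nat.factorial m)) * stirling1 m k := by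
      rw [Finset.mul_sum]
      exact Finset.sum_congr rfl fun m _ => by rw [hstep]; ring
    rw [this, ← ih]
    have hs : stirling1 (n+2) (k+1) = (n+1) * stirling1 (n+1) (k+1) + stirling1 (n+1) k := rfl
    rw [hs]
    push_cast
    field_simp

lemma T_zero_k (k : ℕ) : T 0 0 k = if k = 0 then 1 else 0 := by
  unfold T
  rw [tsum_eq_single (fun _ : Fin 0 => 0) (fun b hb => absurd (Subsingleton.elim b _) hb)]
  cases k with
  | zero => simp [u]
  | succ k => simp [u]

lemma T_succ_zero (n : ℕ) : T (n+1) (n+1) 0 = 0 := by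
  unfold T
  convert tsum_zero with c
  by_cases hcond : (∑ j : Fin (n+1), (j.1 + 1) * c j) = n+1 ∧ (∑ j : Fin (n+1), c j) = 0
  · exfalso
    have hz : ∀ j : Fin (n+1), c j = 0 := by
      intro j
      have := Finset.sum_eq_zero_iff.mp hcond.2
      exact this j (Finset.mem_univ j)
    have : (∑ j : Fin (n+1), (j.1 + 1) * c j) = 0 :=
      Finset.sum_eq_zero fun j _ => by rw [hz j, mul_zero]
    omega
  · rw [if_neg hcond]

lemma T_eq : ∀ n k : ℕ, T n n k = (stirling1 n k : ℝ) / (Nat.factorial n) := by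
  intro n
  induction n using Nat.strong_induction_on with
  | _ n ih =>
    match n with
    | 0 =>
      intro k
      rw [T_zero_k]
      cases k with
      | zero => simp [stirling1]
      | succ k => simp [stirling1]
    | n + 1 =>
      intro k
      cases k with
      | zero =>
        rw [T_succ_zero]
        have : stirling1 (n+1) 0 = 0 := rfl
        rw [this]
        simp
      | succ k =>
        have hrec := T_rec n k
        have hsum : ∑ m ∈ Finset.range (n+1), T m m k
            = ∑ m ∈ Finset.range (n+1), (stirling1 m k : ℝ) / (Nat.factorial m) :=
          Finset.sum_congr rfl fun m hm => ih m (Finset.mem_range.mp hm) k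
        rw [hsum] at hrec
        have hfac : (Nat.factorial n : ℝ) ≠ 0 := Nat.cast_ne_zero.mpr (Nat.factorial_ne_zero n)
        have hgoal : ((n : ℝ) + 1) * ((stirling1 (n+1) (k+1) : ℝ) / (Nat.factorial (n+1)))
            = ∑ m ∈ Finset.range (n+1), (stirling1 m k : ℝ) / (Nat.factorial m) := by
          rw [stirling_id n k, Finset.sum_div, Finset.mul_sum]
          refine Finset.sum_congr rfl fun m _ => ?_
          have hm : (Nat.factorial m : ℝ) ≠ 0 := Nat.cast_ne_zero.mpr (Nat.factorial_ne_zero m)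
          rw [Nat.factorial_succ]
          push_cast
          field_simp
        have hn1 : ((n : ℝ) + 1) ≠ 0 := by positivity
        have := hrec.trans hgoal.symm
        exact mul_left_cancel₀ hn1 this

lemma prod_theta (θ : ℝ) {n k : ℕ} (c : Fin n → ℕ) (hc : (∑ j : Fin n, c j) = k) :
    (∏ j : Fin n, (θ / (j.1 + 1)) ^ c j / (Nat.factorial (c j)))
      = θ ^ k * u n c := by
  unfold u
  rw [← hc, ← Finset.prod_pow_eq_pow_sum, ← Finset.prod_mul_distrib]
  refine Finset.prod_congr rfl fun j _ => ?_
  have h : θ / (j.1 + 1 : ℝ) = θ * (1 / (j.1 + 1 : ℝ)) := by ring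
  rw [h, mul_pow, mul_div_assoc]

/-- Under ESF(θ), the number of distinct types `K_n` is sufficient for θ:
`P[K_n = k] = |s(n,k)| θ^k / θ_(n)`, and the conditional distribution of the counts
given `K_n = k` does not depend on θ:
`P[C = c | K_n = k] = (n!/|s(n,k)|) ∏_j (1/j)^{c_j}/c_j!`. -/
theorem esf_K_sufficient (θ : ℝ) (hθ : 0 < θ) (n : ℕ) (hn : 1 ≤ n) (k : ℕ)
    (hk : 1 ≤ k) (hkn : k ≤ n) :
    (∑' c : Fin n → ℕ,
      (if (∑ j : Fin n, (j.1 + 1) * c j) = n ∧ (∑ j : Fin n, c j) = k then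
        ((Nat.factorial n : ℝ) / ∏ i ∈ range n, (θ + i)) *
          ∏ j : Fin n, (θ / (j.1 + 1)) ^ c j / (Nat.factorial (c j))
      else 0)
      = (stirling1 n k : ℝ) * θ ^ k / ∏ i ∈ range n, (θ + i)) ∧
    (∀ c : Fin n → ℕ, (∑ j : Fin n, (j.1 + 1) * c j) = n → (∑ j : Fin n, c j) = k →
      (((Nat.factorial n : ℝ) / ∏ i ∈ range n, (θ + i)) *
          ∏ j : Fin n, (θ / (j.1 + 1)) ^ c j / (Nat.factorial (c j))) /
        ((stirling1 n k : ℝ) * θ ^ k / ∏ i ∈ range n, (θ + i))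
        = ((Nat.factorial n : ℝ) / (stirling1 n k : ℝ)) *
            ∏ j : Fin n, (1 / (j.1 + 1 : ℝ)) ^ c j / (Nat.factorial (c j))) := by
  have hD : (0 : ℝ) < ∏ i ∈ range n, (θ + i) := by
    apply Finset.prod_pos
    intro i _
    positivity
  set D := ∏ i ∈ range n, (θ + i) with hDdef
  have hDne : D ≠ 0 := ne_of_gt hD
  have hfac : (Nat.factorial n : ℝ) ≠ 0 := Nat.cast_ne_zero.mpr (Nat.factorial_ne_zero n)
  constructor
  · have hterm : ∀ c : Fin n → ℕ,
        (if (∑ j : Fin n, (j.1 + 1) * c j) = n ∧ (∑ j : Fin n, c j) = k then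
          ((Nat.factorial n : ℝ) / D) *
            ∏ j : Fin n, (θ / (j.1 + 1)) ^ c j / (Nat.factorial (c j))
        else 0)
        = ((Nat.factorial n : ℝ) / D * θ ^ k) *
          (if (∑ j : Fin n, (j.1 + 1) * c j) = n ∧ (∑ j : Fin n, c j) = k then u n c else 0) := by
      intro c
      by_cases hcond : (∑ j : Fin n, (j.1 + 1) * c j) = n ∧ (∑ j : Fin n, c j) = k
      · rw [if_pos hcond, if_pos hcond, prod_theta θ c hcond.2]
        ring
      · rw [if_neg hcond, if_neg hcond, mul_zero]
    rw [tsum_congr hterm, tsum_mul_left]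
    have hT : (∑' c : Fin n → ℕ,
        if (∑ j : Fin n, (j.1 + 1) * c j) = n ∧ (∑ j : Fin n, c j) = k then u n c else 0)
        = (stirling1 n k : ℝ) / (Nat.factorial n) := T_eq n k
    rw [hT]
    field_simp
  · intro c h1 h2
    rw [prod_theta θ c h2]
    have hU : (∏ j : Fin n, (1 / (j.1 + 1 : ℝ)) ^ c j / (Nat.factorial (c j))) = u n c := rfl
    rw [hU]
    generalize u n c = U
    by_cases hs : (stirling1 n k : ℝ) = 0
    · rw [hs]
      simp
    · have hθne : θ ≠ 0 := ne_of_gt hθ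
      have hθk : θ ^ k ≠ 0 := pow_ne_zero _ hθne
      have hne : (stirling1 n k : ℝ) * θ ^ k / D ≠ 0 := by
        apply div_ne_zero (mul_ne_zero hs hθk) hDne
      rw [div_eq_iff hne]
      field_simp
end

section
/- In the Chinese Restaurant Process with parameter θ > 0 run for n steps, the probability that the resulting partition has type counts (c_1,...,c_n) (with c_j blocks of size j) equals the Ewens Sampling Formula: (n!/θ_(n)) ∏_{j=1}^n (θ/j)^{c_j}/c_j!. -/
open Finset

/-- In the Chinese Restaurant Process, each individual `k` either starts a new type
(`ch k = none`) or copies the type of a previously seated individual `i < k`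
(`ch k = some i`).  `crpLabel ch k` is the founding individual of `k`'s type. -/
def crpLabel {n : ℕ} (ch : (k : Fin n) → Option (Fin k.1)) : Fin n → Fin n
  | k =>
    match ch k with
    | none => k
    | some i => crpLabel ch ⟨i.1, lt_trans i.2 k.2⟩
  termination_by k => k.1
  decreasing_by exact i.2

/-- The probability of a given sequence of CRP choices: individual `k` starts a new type
with probability `θ/(θ+k)`, and copies any given earlier individual with probability
`1/(θ+k)`. -/
noncomputable def crpProb (θ : ℝ) {n : ℕ} (ch : (k : Fin n) → Option (Fin k.1)) : ℝ :=
  ∏ k : Fin n, (if ch k = none then θ else 1) / (θ + k.1)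

/-!
The probability of a choice sequence is `θ ^ K / θ_(n)`, where `K` is its number of blocks, so
the claim reduces to counting: the number `N(c)` of choice sequences of type `c` satisfies
`N(c) * ∏ j ^ c_j * c_j! = n!`. This goes by induction on `n`. A sequence of type `c` on `n + 1`
individuals comes from a sequence on `n` individuals either by opening a singleton block, or by
letting the last individual join one of the `s * c'_s` individuals sitting in blocks of size `s`.
The resulting recursion for `N` is the one satisfied by `n! / ∏ j ^ c_j * c_j!`, because
`∑ j * c_j = n + 1`.
-/

lemma Multiset.cons_eq_iff {α : Type*} [DecidableEq α] {a : α} {s t : Multiset α} :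
    a ::ₘ s = t ↔ a ∈ t ∧ s = t.erase a :=
  ⟨fun h => h ▸ ⟨Multiset.mem_cons_self a s, (Multiset.erase_cons_head a s).symm⟩,
    fun ⟨ha, hs⟩ => hs ▸ Multiset.cons_erase ha⟩

lemma Multiset.sum_eq_sum_range_mul_count {m : Multiset ℕ} {N : ℕ} (h : ∀ a ∈ m, a < N) :
    m.sum = ∑ a ∈ Finset.range N, a * m.count a := by
  rw [Finset.sum_multiset_count,
    Finset.sum_subset (fun a ha => Finset.mem_range.2 (h a (by simpa using ha)))
      fun a _ ha => by simp [Multiset.count_eq_zero.2 (by simpa using ha)]]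
  simp [mul_comm]

namespace CRP

open scoped Nat

abbrev Choices (n : ℕ) := (k : Fin n) → Option (Fin k.1)

variable {n : ℕ}

section Label

variable (ch : Choices n)

lemma crpLabel_of_eq_none {k : Fin n} (h : ch k = none) : crpLabel ch k = k := by
  rw [crpLabel, h]

lemma crpLabel_of_eq_some {k : Fin n} {i : Fin k.1} (h : ch k = some i) :
    crpLabel ch k = crpLabel ch ⟨i, i.2.trans k.2⟩ := by
  rw [crpLabel, h]

lemma choice_crpLabel (k : Fin n) : ch (crpLabel ch k) = none := by
  cases h : ch k with
  | none => rw [crpLabel_of_eq_none ch h, h]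
  | some i =>
    rw [crpLabel_of_eq_some ch h]
    exact choice_crpLabel ⟨i, i.2.trans k.2⟩
termination_by k.1
decreasing_by exact i.2

variable (o : Option (Fin n))

lemma crpLabel_snoc_castSucc (k : Fin n) :
    crpLabel (Fin.snoc ch o : Choices (n + 1)) k.castSucc = (crpLabel ch k).castSucc := by
  cases h : ch k with
  | none => rw [crpLabel_of_eq_none ch h, crpLabel_of_eq_none _ (by simpa using h)]
  | some i =>
    have h' : (Fin.snoc ch o : Choices (n + 1)) k.castSucc = some i := by simpa using h
    rw [crpLabel_of_eq_some ch h, crpLabel_of_eq_some _ h']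
    exact crpLabel_snoc_castSucc ⟨i, i.2.trans k.2⟩
termination_by k.1
decreasing_by exact i.2

lemma crpLabel_snoc_none_last :
    crpLabel (Fin.snoc ch none : Choices (n + 1)) (Fin.last n) = Fin.last n :=
  crpLabel_of_eq_none _ (by simp)

lemma crpLabel_snoc_some_last (i : Fin n) :
    crpLabel (Fin.snoc ch (some i) : Choices (n + 1)) (Fin.last n) =
      (crpLabel ch i).castSucc := by
  rw [crpLabel_of_eq_some _ (i := i) (by simp)]
  exact crpLabel_snoc_castSucc ch _ i

end Label

section BlockSize

variable (ch : Choices n)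

def blockSize (ℓ : Fin n) : ℕ := #{k | crpLabel ch k = ℓ}

def blockSizes : Multiset ℕ := ∑ ℓ with ch ℓ = none, {blockSize ch ℓ}

lemma eq_none_of_blockSize_ne_zero {ℓ : Fin n} (h : blockSize ch ℓ ≠ 0) : ch ℓ = none := by
  obtain ⟨k, hk⟩ := card_ne_zero.1 h
  rw [← (mem_filter.1 hk).2]
  exact choice_crpLabel ch k

lemma blockSize_pos_of_eq_none {ℓ : Fin n} (h : ch ℓ = none) : 0 < blockSize ch ℓ :=
  card_pos.2 ⟨ℓ, by simp [crpLabel_of_eq_none ch h]⟩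

lemma blockSize_le (ℓ : Fin n) : blockSize ch ℓ ≤ n :=
  (card_filter_le _ _).trans (card_fin n).le

lemma pos_and_le_of_mem_blockSizes {s : ℕ} (hs : s ∈ blockSizes ch) : 0 < s ∧ s ≤ n := by
  obtain ⟨ℓ, hℓ, hs⟩ := Multiset.mem_sum.1 hs
  rw [Multiset.mem_singleton.1 hs]
  exact ⟨blockSize_pos_of_eq_none ch (mem_filter.1 hℓ).2, blockSize_le ch ℓ⟩

lemma card_blockSizes : Multiset.card (blockSizes ch) = #{ℓ | ch ℓ = none} := by
  simp [blockSizes]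

lemma count_blockSizes {s : ℕ} (hs : s ≠ 0) :
    (blockSizes ch).count s = #{ℓ | blockSize ch ℓ = s} := by
  rw [blockSizes, Multiset.count_sum', card_filter, sum_filter]
  refine sum_congr rfl fun ℓ _ => ?_
  by_cases hℓ : blockSize ch ℓ = s
  · simp [hℓ, eq_none_of_blockSize_ne_zero ch (hℓ ▸ hs)]
  · simp [hℓ, Ne.symm hℓ]

lemma card_filter_blockSize_crpLabel_eq (s : ℕ) :
    #{k | blockSize ch (crpLabel ch k) = s} = s * (blockSizes ch).count s := by
  rcases eq_or_ne s 0 with rfl | hs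
  · simp [(blockSize_pos_of_eq_none ch (choice_crpLabel ch _)).ne']
  rw [card_eq_sum_card_fiberwise (f := crpLabel ch) (t := {ℓ | blockSize ch ℓ = s})
    (fun k hk => by simpa using hk), count_blockSizes ch hs, mul_comm, ← smul_eq_mul,
    ← sum_const]
  refine sum_congr rfl fun ℓ hℓ => ?_
  have hℓs : blockSize ch ℓ = s := (mem_filter.1 hℓ).2
  rw [filter_filter, ← hℓs]
  exact congrArg card (filter_congr fun k _ => and_iff_right_of_imp fun hk => by rw [hk])

lemma sum_blockSize_crpLabel {M : Type*} [AddCommMonoid M] (f : ℕ → M) :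
    ∑ k, f (blockSize ch (crpLabel ch k))
      = ∑ s ∈ range n, ((s + 1) * (blockSizes ch).count (s + 1)) • f (s + 1) := by
  have fiber (s : ℕ) :
      ∑ k with blockSize ch (crpLabel ch k) = s, f (blockSize ch (crpLabel ch k)) =
        (s * (blockSizes ch).count s) • f s := by
    rw [sum_congr rfl fun k hk => by rw [(mem_filter.1 hk).2], sum_const,
      card_filter_blockSize_crpLabel_eq]
  rw [← sum_fiberwise_of_maps_to (t := range (n + 1))
    (g := fun k => blockSize ch (crpLabel ch k))
    (fun k _ => mem_range.2 (Nat.lt_succ_of_le (blockSize_le ch _))), sum_range_succ']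
  simp only [fiber, zero_mul, zero_smul, add_zero]

end BlockSize

section Snoc

variable (ch : Choices n)

lemma blockSize_snoc_castSucc (o : Option (Fin n)) (ℓ : Fin n) :
    blockSize (Fin.snoc ch o : Choices (n + 1)) ℓ.castSucc = blockSize ch ℓ +
      if crpLabel (Fin.snoc ch o : Choices (n + 1)) (Fin.last n) = ℓ.castSucc then 1 else 0 := by
  simp only [blockSize, card_filter, Fin.sum_univ_castSucc, crpLabel_snoc_castSucc,
    Fin.castSucc_inj]

lemma blockSize_snoc_none_last :
    blockSize (Fin.snoc ch none : Choices (n + 1)) (Fin.last n) = 1 := by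
  rw [blockSize, card_filter, Fin.sum_univ_castSucc]
  simp only [crpLabel_snoc_castSucc, crpLabel_snoc_none_last, Fin.castSucc_ne_last]
  simp

lemma blockSizes_snoc_none :
    blockSizes (Fin.snoc ch none : Choices (n + 1)) = 1 ::ₘ blockSizes ch := by
  simp only [blockSizes, sum_filter, Fin.sum_univ_castSucc, Fin.snoc_castSucc, Fin.snoc_last,
    blockSize_snoc_castSucc, crpLabel_snoc_none_last, blockSize_snoc_none_last]
  simp [(Fin.castSucc_ne_last _).symm, add_comm, Multiset.singleton_add]

lemma blockSizes_snoc_some (i : Fin n) :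
    blockSize ch (crpLabel ch i) ::ₘ blockSizes (Fin.snoc ch (some i) : Choices (n + 1))
      = (blockSize ch (crpLabel ch i) + 1) ::ₘ blockSizes ch := by
  have hL : ch (crpLabel ch i) = none := choice_crpLabel ch i
  simp only [blockSizes, sum_filter, Fin.sum_univ_castSucc, Fin.snoc_castSucc, Fin.snoc_last,
    blockSize_snoc_castSucc, crpLabel_snoc_some_last, Fin.castSucc_inj, reduceCtorEq, if_false,
    add_zero]
  rw [← add_sum_erase _ _ (mem_univ (crpLabel ch i)),
    ← add_sum_erase _ _ (mem_univ (crpLabel ch i)),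
    sum_congr rfl fun ℓ hℓ => by rw [if_neg (ne_of_mem_erase hℓ).symm, add_zero]]
  simp only [hL, if_true, ← Multiset.singleton_add, ← add_assoc]
  rw [add_comm {_}]

end Snoc

/-- The `z_λ` of symmetric function theory: `n! / z_λ` permutations of `n` points have cycle
type `λ`. -/
def zFactor (m : Multiset ℕ) : ℕ := ∏ j ∈ m.toFinset, j ^ m.count j * (m.count j)!

lemma zFactor_eq_prod_of_subset {m : Multiset ℕ} {s : Finset ℕ} (h : m.toFinset ⊆ s) :
    zFactor m = ∏ j ∈ s, j ^ m.count j * (m.count j)! :=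
  prod_subset h fun j _ hj => by simp [Multiset.count_eq_zero.2 (by simpa using hj)]

lemma zFactor_cons (a : ℕ) (m : Multiset ℕ) :
    zFactor (a ::ₘ m) = a * (m.count a + 1) * zFactor m := by
  rw [zFactor_eq_prod_of_subset (s := insert a m.toFinset) (by simp),
    zFactor_eq_prod_of_subset (subset_insert a m.toFinset),
    ← mul_prod_erase _ _ (mem_insert_self _ _),
    ← mul_prod_erase (insert a m.toFinset) _ (mem_insert_self _ _),
    prod_congr rfl fun j hj => by rw [Multiset.count_cons_of_ne (ne_of_mem_erase hj)]]
  simp only [Multiset.count_cons_self, pow_succ, Nat.factorial_succ]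
  ring

lemma zFactor_pos {m : Multiset ℕ} (h : 0 ∉ m) : 0 < zFactor m :=
  prod_pos fun _ hj => Nat.mul_pos
    (pow_pos (Nat.pos_of_ne_zero fun hj0 => h (hj0 ▸ Multiset.mem_toFinset.1 hj)) _)
    (Nat.factorial_pos _)

lemma sum_choices_succ {M : Type*} [AddCommMonoid M] (f : Choices (n + 1) → M) :
    ∑ ch, f ch =
      ∑ ch : Choices n, (f (Fin.snoc ch none) + ∑ i, f (Fin.snoc ch (some i))) := by
  rw [← (Fin.snocEquiv _).sum_comp, Fintype.sum_prod_type_right]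
  exact sum_congr rfl fun ch _ => Fintype.sum_option _

lemma card_blockSizes_succ (m : Multiset ℕ) :
    #{ch : Choices (n + 1) | blockSizes ch = m} =
      (if 1 ∈ m then #{ch : Choices n | blockSizes ch = m.erase 1} else 0) +
      ∑ s ∈ range n, (s + 1) * (m.count (s + 1) + 1) *
        if s + 2 ∈ m then #{ch : Choices n | blockSizes ch = (s + 1) ::ₘ m.erase (s + 2)}
        else 0 := by
  have snoc_some (ch : Choices n) :
      ∑ i, (if blockSizes (Fin.snoc ch (some i) : Choices (n + 1)) = m then 1 else 0) =
        ∑ s ∈ range n, ((s + 1) * (blockSizes ch).count (s + 1)) •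
          if s + 2 ∈ m ∧ blockSizes ch = (s + 1) ::ₘ m.erase (s + 2) then 1 else 0 := by
    refine (sum_congr rfl fun i _ => if_congr ?_ rfl rfl).trans (sum_blockSize_crpLabel ch
      fun s => if s + 1 ∈ m ∧ blockSizes ch = s ::ₘ m.erase (s + 1) then 1 else 0)
    rw [← Multiset.cons_inj_right (blockSize ch (crpLabel ch i)), blockSizes_snoc_some,
      Multiset.cons_eq_iff, Multiset.mem_cons, Multiset.erase_cons_tail _ (by omega)]
    simp
  rw [card_filter, sum_choices_succ, sum_add_distrib, sum_congr rfl fun ch _ => snoc_some ch,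
    sum_comm]
  simp only [blockSizes_snoc_none, Multiset.cons_eq_iff]
  congr 1
  · by_cases h : 1 ∈ m
    · simp only [h, true_and, if_true, card_filter]
    · simp [h]
  refine sum_congr rfl fun s _ => ?_
  by_cases h : s + 2 ∈ m
  · rw [if_pos h, card_filter, mul_sum]
    refine sum_congr rfl fun ch _ => ?_
    by_cases hch : blockSizes ch = (s + 1) ::ₘ m.erase (s + 2)
    · simp [h, hch, Multiset.count_erase_of_ne (show s + 1 ≠ s + 2 by omega)]
    · simp [hch]
  · simp [h]

theorem card_blockSizes_mul_zFactor (m : Multiset ℕ) (h0 : 0 ∉ m) (hm : m.sum = n) :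
    #{ch : Choices n | blockSizes ch = m} * zFactor m = n ! := by
  induction n generalizing m with
  | zero =>
    obtain rfl : m = 0 := Multiset.eq_zero_of_forall_notMem fun a ha => by
      obtain rfl : a = 0 := Nat.le_zero.1 (hm ▸ Multiset.le_sum_of_mem ha)
      exact h0 ha
    simp [zFactor, blockSizes]
  | succ n ih =>
    have singleton_term : (if 1 ∈ m then #{ch : Choices n | blockSizes ch = m.erase 1} else 0) *
        zFactor m = m.count 1 * n ! := by
      by_cases h1 : 1 ∈ m
      · obtain ⟨m', rfl⟩ := Multiset.exists_cons_of_mem h1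
        rw [if_pos h1, Multiset.erase_cons_head, zFactor_cons, Multiset.count_cons_self,
          ← ih m' (fun h => h0 (Multiset.mem_cons_of_mem h)) (by simpa [add_comm] using hm)]
        ring
      · simp [h1]
    have growth_term (s : ℕ) : (s + 1) * (m.count (s + 1) + 1) *
        (if s + 2 ∈ m then #{ch : Choices n | blockSizes ch = (s + 1) ::ₘ m.erase (s + 2)}
          else 0) * zFactor m = (s + 2) * m.count (s + 2) * n ! := by
      by_cases h2 : s + 2 ∈ m
      · obtain ⟨m', rfl⟩ := Multiset.exists_cons_of_mem h2
        have := ih ((s + 1) ::ₘ m') (by simpa using fun h => h0 (Multiset.mem_cons_of_mem h))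
          (by simp at hm ⊢; omega)
        rw [if_pos h2, Multiset.erase_cons_head, zFactor_cons, Multiset.count_cons_self,
          Multiset.count_cons_of_ne (by omega), ← this, zFactor_cons]
        ring
      · simp [h2]
    have hsum : m.count 1 + ∑ s ∈ range n, (s + 2) * m.count (s + 2) = n + 1 := by
      rw [← hm, Multiset.sum_eq_sum_range_mul_count (N := n + 2)
        fun a ha => Nat.lt_succ_of_le (hm ▸ Multiset.le_sum_of_mem ha), sum_range_succ',
        sum_range_succ']
      simp only [zero_mul, add_zero, zero_add, one_mul]
      exact add_comm _ _
    rw [card_blockSizes_succ, add_mul, sum_mul, singleton_term,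
      sum_congr rfl fun s _ => growth_term s, ← sum_mul, ← add_mul, hsum, Nat.factorial_succ]

lemma crpProb_eq_pow_div (θ : ℝ) (ch : Choices n) :
    crpProb θ ch = θ ^ Multiset.card (blockSizes ch) / ∏ i ∈ range n, (θ + i) := by
  rw [crpProb, prod_div_distrib, prod_ite, prod_const, prod_const_one, mul_one, card_blockSizes,
    Fin.prod_univ_eq_prod_range (fun i => θ + i)]

section OfCounts

variable (c : Fin n → ℕ)

def ofCounts : Multiset ℕ := ∑ j, Multiset.replicate (c j) (j.1 + 1)

lemma count_ofCounts (j : Fin n) : (ofCounts c).count (j.1 + 1) = c j := by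
  simp [ofCounts, Multiset.count_sum', Multiset.count_replicate, Fin.val_inj]

lemma pos_and_le_of_mem_ofCounts {s : ℕ} (hs : s ∈ ofCounts c) : 0 < s ∧ s ≤ n := by
  obtain ⟨j, _, hj⟩ := Multiset.mem_sum.1 hs
  rw [Multiset.eq_of_mem_replicate hj]
  omega

lemma zero_notMem_ofCounts : 0 ∉ ofCounts c :=
  fun h => (pos_and_le_of_mem_ofCounts c h).1.ne rfl

lemma sum_ofCounts : (ofCounts c).sum = ∑ j, (j.1 + 1) * c j := by
  simp [ofCounts, Multiset.sum_sum, mul_comm]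

lemma card_ofCounts : Multiset.card (ofCounts c) = ∑ j, c j := by
  simp [ofCounts]

lemma zFactor_ofCounts : zFactor (ofCounts c) = ∏ j, (j.1 + 1) ^ c j * (c j)! := by
  rw [zFactor_eq_prod_of_subset (s := univ.image fun j : Fin n => j.1 + 1), prod_image]
  · simp only [count_ofCounts]
  · intro i _ j _ h
    exact Fin.ext (by simpa using h)
  · intro s hs
    have := pos_and_le_of_mem_ofCounts c (Multiset.mem_toFinset.1 hs)
    exact mem_image.2 ⟨⟨s - 1, by omega⟩, mem_univ _, by simp; omega⟩

lemma eq_ofCounts_iff {m : Multiset ℕ} (hm : ∀ s ∈ m, 0 < s ∧ s ≤ n) :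
    m = ofCounts c ↔ ∀ j : Fin n, m.count (j.1 + 1) = c j := by
  refine ⟨fun h j => h ▸ count_ofCounts c j, fun h => Multiset.ext.2 fun s => ?_⟩
  by_cases hs : 0 < s ∧ s ≤ n
  · obtain ⟨j, rfl⟩ : ∃ j : Fin n, s = j.1 + 1 := ⟨⟨s - 1, by omega⟩, by simp; omega⟩
    rw [h, count_ofCounts]
  · rw [Multiset.count_eq_zero.2 fun h' => hs (hm s h'),
      Multiset.count_eq_zero.2 fun h' => hs (pos_and_le_of_mem_ofCounts c h')]

end OfCounts

end CRP

theorem crp_gives_esf_general (θ : ℝ) (n : ℕ) (c : Fin n → ℕ)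
    (hc : (∑ j : Fin n, (j.1 + 1) * c j) = n) :
    ∑ ch ∈ Finset.univ.filter
        (fun ch : (k : Fin n) → Option (Fin k.1) =>
          ∀ j : Fin n,
            (Finset.univ.filter (fun ℓ : Fin n =>
              (Finset.univ.filter (fun k : Fin n => crpLabel ch k = ℓ)).card = j.1 + 1)).card
              = c j),
      crpProb θ ch
      = ((Nat.factorial n : ℝ) / ∏ i ∈ range n, (θ + i)) *
          ∏ j : Fin n, (θ / (j.1 + 1)) ^ c j / (Nat.factorial (c j)) := by
  have hfilter (ch : CRP.Choices n) :
      (∀ j : Fin n, #{ℓ | #{k | crpLabel ch k = ℓ} = j.1 + 1} = c j) ↔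
        CRP.blockSizes ch = CRP.ofCounts c := by
    rw [CRP.eq_ofCounts_iff c fun s => CRP.pos_and_le_of_mem_blockSizes ch]
    exact forall_congr' fun j => by rw [CRP.count_blockSizes ch j.1.succ_ne_zero]; rfl
  have hcount := CRP.card_blockSizes_mul_zFactor (CRP.ofCounts c) (CRP.zero_notMem_ofCounts c)
    ((CRP.sum_ofCounts c).trans hc)
  have hprod : ∏ j : Fin n, (θ / (j.1 + 1)) ^ c j / (Nat.factorial (c j)) =
      θ ^ Multiset.card (CRP.ofCounts c) / CRP.zFactor (CRP.ofCounts c) := by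
    rw [CRP.card_ofCounts, CRP.zFactor_ofCounts]
    push_cast
    simp only [div_pow, div_div, prod_div_distrib, prod_pow_eq_pow_sum]
  have hz : (CRP.zFactor (CRP.ofCounts c) : ℝ) ≠ 0 := by
    exact_mod_cast (CRP.zFactor_pos (CRP.zero_notMem_ofCounts c)).ne'
  rw [filter_congr fun ch _ => hfilter ch, sum_congr rfl fun ch hch => by
    rw [CRP.crpProb_eq_pow_div, (mem_filter.1 hch).2], sum_const, nsmul_eq_mul, ← hcount, hprod]
  push_cast
  field_simp

/-- The Chinese Restaurant Process with parameter θ > 0 run for n steps produces a random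
partition whose type counts `(c_1, …, c_n)` follow the Ewens Sampling Formula:
the total probability of all choice sequences with `c j` types of size `j` equals
`(n!/θ_(n)) ∏_j (θ/j)^{c_j}/c_j!`. -/
theorem crp_gives_esf (θ : ℝ) (hθ : 0 < θ) (n : ℕ) (hn : 1 ≤ n) (c : Fin n → ℕ)
    (hc : (∑ j : Fin n, (j.1 + 1) * c j) = n) :
    ∑ ch ∈ Finset.univ.filter
        (fun ch : (k : Fin n) → Option (Fin k.1) =>
          ∀ j : Fin n,
            (Finset.univ.filter (fun ℓ : Fin n =>
              (Finset.univ.filter (fun k : Fin n => crpLabel ch k = ℓ)).card = j.1 + 1)).card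
              = c j),
      crpProb θ ch
      = ((Nat.factorial n : ℝ) / ∏ i ∈ range n, (θ + i)) *
          ∏ j : Fin n, (θ / (j.1 + 1)) ^ c j / (Nat.factorial (c j)) :=
  crp_gives_esf_general θ n c hc
end

section
/- Watterson's conditioning representation: if Z_1,...,Z_n are independent with Z_j ~ Poisson(θ/j), then the conditional distribution of (Z_1,...,Z_n) given ∑_{j=1}^n j·Z_j = n equals the Ewens Sampling Formula ESF(θ): P[Z = c | ∑ j Z_j = n] = (n!/θ_(n)) ∏_{j=1}^n (θ/j)^{c_j}/c_j! for all c with ∑ j c_j = n. -/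
/-!
Writing `λ_j = θ / j`, the joint mass `P[Z = z]` is `e^{-∑ λ_j}` times the weight
`w(z) = ∏_j λ_j^{z_j} / z_j!`, so the ratio reduces to `w(c) / A(n)`, where `A(m)` is the sum of
`w(z)` over the multiplicity vectors `z` with `∑_j j z_j = m`. The size-bias identity of the
Poisson law, `k · λ^k / k! = λ · λ^{k-1} / (k-1)!`, summed over these vectors gives
`m A(m) = θ ∑_{k<m} A(k)` for `m ≤ n`; the sequence `θ_(m) / m!` satisfies the same recursion
and starts at `1 = A(0)`, so `A(n) = θ_(n) / n!`.
-/

open Finset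

namespace Watterson

variable {n m : ℕ}

/- Coordinate `j : Fin n` of a vector `z` is the multiplicity of the part `j + 1`, so
`weightedSum z` is the paper's `T_{0n}(z) = ∑_{j=1}^n j z_j`. -/
def weightedSum (z : Fin n → ℕ) : ℕ := ∑ j, (j.1 + 1) * z j

lemma weightedSum_add_single (z : Fin n → ℕ) (j : Fin n) :
    weightedSum (z + Pi.single j 1) = weightedSum z + (j.1 + 1) := by
  simp only [weightedSum, Pi.add_apply, mul_add, sum_add_distrib]
  simp [Pi.single_apply]

lemma mul_apply_le_weightedSum (z : Fin n → ℕ) (j : Fin n) :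
    (j.1 + 1) * z j ≤ weightedSum z :=
  single_le_sum (f := fun i : Fin n => (i.1 + 1) * z i) (fun _ _ => Nat.zero_le _) (mem_univ j)

def multiplicityVectors (n m : ℕ) : Finset (Fin n → ℕ) :=
  {z ∈ Fintype.piFinset fun _ => range (m + 1) | weightedSum z = m}

lemma mem_multiplicityVectors {z : Fin n → ℕ} :
    z ∈ multiplicityVectors n m ↔ weightedSum z = m := by
  refine ⟨fun h => (mem_filter.mp h).2, fun h => mem_filter.mpr ⟨?_, h⟩⟩
  refine Fintype.mem_piFinset.mpr fun j => mem_range_succ_iff.mpr ?_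
  calc z j ≤ (j.1 + 1) * z j := Nat.le_mul_of_pos_left _ j.1.succ_pos
    _ ≤ m := h ▸ mul_apply_le_weightedSum z j

lemma multiplicityVectors_zero (n : ℕ) : multiplicityVectors n 0 = {0} := by
  ext z
  simp only [mem_multiplicityVectors, weightedSum, mem_singleton, sum_eq_zero_iff, mem_univ,
    true_implies, mul_eq_zero, Nat.succ_ne_zero, false_or, funext_iff, Pi.zero_apply]

variable {K : Type*} [Field K] [CharZero K] (θ : K)

def poissonWeight (z : Fin n → ℕ) : K := ∏ j : Fin n, (θ / (j.1 + 1)) ^ z j / (z j).factorial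

lemma pow_succ_div_factorial_succ_mul (x : K) (k : ℕ) :
    x ^ (k + 1) / (k + 1).factorial * (k + 1) = x * (x ^ k / k.factorial) := by
  have : (k.factorial : K) ≠ 0 := Nat.cast_ne_zero.mpr k.factorial_ne_zero
  rw [Nat.factorial_succ]
  push_cast
  field_simp
  ring

lemma poissonWeight_add_single_mul (z : Fin n → ℕ) (j : Fin n) :
    poissonWeight θ (z + Pi.single j 1) * (z j + 1) = θ / (j.1 + 1) * poissonWeight θ z := by
  classical
  simp only [poissonWeight, ← mul_prod_erase univ _ (mem_univ j)]
  have hrest : ∀ i ∈ univ.erase j, (z + Pi.single j 1 : Fin n → ℕ) i = z i := fun i hi => by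
    simp [ne_of_mem_erase hi]
  rw [prod_congr rfl fun i hi => by rw [hrest i hi], Pi.add_apply, Pi.single_eq_same,
    mul_right_comm, pow_succ_div_factorial_succ_mul, mul_assoc]

lemma sum_multiplicityVectors_apply_mul {j : Fin n} (hj : j.1 + 1 ≤ m) :
    ∑ z ∈ multiplicityVectors n m, (z j : K) * poissonWeight θ z
      = θ / (j.1 + 1) * ∑ z ∈ multiplicityVectors n (m - (j.1 + 1)), poissonWeight θ z := by
  classical
  have single_le {z : Fin n → ℕ} (hz : z j ≠ 0) : Pi.single j 1 ≤ z := fun i => by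
    by_cases hi : i = j
    · subst hi; simpa [Nat.one_le_iff_ne_zero]
    · simp [hi]
  rw [← sum_filter_of_ne (p := fun z => z j ≠ 0) fun z _ h hz => h (by simp [hz]), mul_sum]
  symm
  refine sum_nbij' (· + Pi.single j 1) (· - Pi.single j 1) ?_ ?_ ?_ ?_ ?_
  · intro z hz
    simp only [mem_filter, mem_multiplicityVectors, weightedSum_add_single] at hz ⊢
    refine ⟨by omega, by simp⟩
  · intro z hz
    simp only [mem_filter, mem_multiplicityVectors] at hz ⊢
    have := weightedSum_add_single (z - Pi.single j 1) j
    rw [tsub_add_cancel_of_le (single_le hz.2)] at this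
    omega
  · intro z _
    exact add_tsub_cancel_right z _
  · intro z hz
    exact tsub_add_cancel_of_le (single_le (mem_filter.mp hz).2)
  · intro z _
    rw [← poissonWeight_add_single_mul, mul_comm]
    simp

lemma sum_multiplicityVectors_apply_mul_of_lt {j : Fin n} (hj : m < j.1 + 1) :
    ∑ z ∈ multiplicityVectors n m, (z j : K) * poissonWeight θ z = 0 := by
  refine sum_eq_zero fun z hz => ?_
  have hzj : z j = 0 := by
    by_contra h
    have := (mem_multiplicityVectors.mp hz) ▸ mul_apply_le_weightedSum z j
    have := Nat.le_mul_of_pos_right (j.1 + 1) (Nat.pos_of_ne_zero h)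
    omega
  simp [hzj]

lemma mul_sum_multiplicityVectors (hm : m ≤ n) :
    (m : K) * ∑ z ∈ multiplicityVectors n m, poissonWeight θ z
      = θ * ∑ k ∈ range m, ∑ z ∈ multiplicityVectors n k, poissonWeight θ z := by
  have hterm (j : Fin n) :
      ((j.1 + 1 : ℕ) : K) * ∑ z ∈ multiplicityVectors n m, (z j : K) * poissonWeight θ z
        = if j.1 < m then θ * ∑ z ∈ multiplicityVectors n (m - (j.1 + 1)), poissonWeight θ z
          else 0 := by
    split_ifs with hj
    · have : ((j.1 + 1 : ℕ) : K) ≠ 0 := Nat.cast_ne_zero.mpr j.1.succ_ne_zero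
      rw [sum_multiplicityVectors_apply_mul θ hj]
      push_cast at this ⊢
      field_simp
    · rw [sum_multiplicityVectors_apply_mul_of_lt θ (by omega), mul_zero]
  calc (m : K) * ∑ z ∈ multiplicityVectors n m, poissonWeight θ z
      = ∑ z ∈ multiplicityVectors n m, (weightedSum z : K) * poissonWeight θ z := by
        rw [mul_sum]
        exact sum_congr rfl fun z hz => by rw [mem_multiplicityVectors.mp hz]
    _ = ∑ j : Fin n, ((j.1 + 1 : ℕ) : K) *
          ∑ z ∈ multiplicityVectors n m, (z j : K) * poissonWeight θ z := by
        simp only [weightedSum, Nat.cast_sum, Nat.cast_mul, sum_mul, mul_sum]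
        rw [sum_comm]
        exact sum_congr rfl fun _ _ => sum_congr rfl fun _ _ => by ring
    _ = ∑ k ∈ range m,
          θ * ∑ z ∈ multiplicityVectors n (m - (k + 1)), poissonWeight θ z := by
        rw [sum_congr rfl fun j _ => hterm j, Fin.sum_univ_eq_sum_range (fun k =>
          if k < m then θ * ∑ z ∈ multiplicityVectors n (m - (k + 1)), poissonWeight θ z
          else 0), ← sum_filter]
        congr 1
        ext k
        simp only [mem_filter, mem_range]
        omega
    _ = θ * ∑ k ∈ range m, ∑ z ∈ multiplicityVectors n k, poissonWeight θ z := by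
        rw [← mul_sum,
          ← sum_range_reflect (fun k => ∑ z ∈ multiplicityVectors n k, poissonWeight θ z)]
        exact congrArg _ (sum_congr rfl fun k _ => by congr 2; omega)

lemma mul_prod_range_add_div_factorial (m : ℕ) :
    (m : K) * ((∏ i ∈ range m, (θ + i)) / m.factorial)
      = θ * ∑ k ∈ range m, (∏ i ∈ range k, (θ + i)) / k.factorial := by
  induction m with
  | zero => simp
  | succ m ih =>
    have hfac : (m.factorial : K) ≠ 0 := Nat.cast_ne_zero.mpr m.factorial_ne_zero
    have hm : (m : K) + 1 ≠ 0 := by exact_mod_cast m.succ_ne_zero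
    rw [sum_range_succ, mul_add, ← ih, prod_range_succ, Nat.factorial_succ]
    push_cast
    field_simp
    ring

lemma eq_of_mul_eq_mul_sum_range {f g : ℕ → K} {N : ℕ} (h0 : f 0 = g 0)
    (hf : ∀ m ≤ N, (m : K) * f m = θ * ∑ k ∈ range m, f k)
    (hg : ∀ m ≤ N, (m : K) * g m = θ * ∑ k ∈ range m, g k) : ∀ m ≤ N, f m = g m := by
  intro m
  induction m using Nat.strong_induction_on with
  | _ m ih =>
    rcases m with _ | m
    · exact fun _ => h0
    · intro hm
      have hsum : ∑ k ∈ range (m + 1), f k = ∑ k ∈ range (m + 1), g k :=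
        sum_congr rfl fun k hk => ih k (mem_range.mp hk) (by simp at hk; omega)
      refine mul_left_cancel₀ (Nat.cast_ne_zero.mpr m.succ_ne_zero : ((m + 1 : ℕ) : K) ≠ 0) ?_
      rw [hf _ hm, hg _ hm, hsum]

theorem sum_multiplicityVectors_poissonWeight (hm : m ≤ n) :
    ∑ z ∈ multiplicityVectors n m, poissonWeight θ z
      = (∏ i ∈ range m, (θ + i)) / m.factorial := by
  refine eq_of_mul_eq_mul_sum_range θ ?_
    (fun k hk => mul_sum_multiplicityVectors θ (hk.trans hm))
    (fun k _ => mul_prod_range_add_div_factorial θ k) m le_rfl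
  simp [multiplicityVectors_zero, poissonWeight]

end Watterson

open Watterson

theorem watterson_conditioning_general (θ : ℝ) (n : ℕ)
    (c : Fin n → ℕ) :
    (∏ j : Fin n, Real.exp (-(θ / (j.1 + 1))) * (θ / (j.1 + 1)) ^ c j
        / (Nat.factorial (c j))) /
      (∑' z : Fin n → ℕ,
        (if (∑ j : Fin n, (j.1 + 1) * z j) = n then
          ∏ j : Fin n, Real.exp (-(θ / (j.1 + 1))) * (θ / (j.1 + 1)) ^ z j
            / (Nat.factorial (z j))
        else 0))
      = ((Nat.factorial n : ℝ) / ∏ i ∈ range n, (θ + i)) *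
          ∏ j : Fin n, (θ / (j.1 + 1)) ^ c j / (Nat.factorial (c j)) := by
  set E : ℝ := ∏ j : Fin n, Real.exp (-(θ / (j.1 + 1)))
  have hE : E ≠ 0 := (prod_pos fun _ _ => Real.exp_pos _).ne'
  have hjoint (z : Fin n → ℕ) :
      ∏ j : Fin n, Real.exp (-(θ / (j.1 + 1))) * (θ / (j.1 + 1)) ^ z j / (z j).factorial
        = E * poissonWeight θ z := by
    simp only [poissonWeight, ← prod_mul_distrib, mul_div_assoc, E]
  have hmarginal : (∑' z : Fin n → ℕ,
        if (∑ j : Fin n, (j.1 + 1) * z j) = n then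
          ∏ j : Fin n, Real.exp (-(θ / (j.1 + 1))) * (θ / (j.1 + 1)) ^ z j / (z j).factorial
        else 0)
      = E * ∑ z ∈ multiplicityVectors n n, poissonWeight θ z := by
    rw [mul_sum]
    refine (tsum_eq_sum (s := multiplicityVectors n n) fun z hz => ?_).trans ?_
    · exact if_neg (mt mem_multiplicityVectors.mpr hz)
    · exact sum_congr rfl fun z hz => (if_pos (mem_multiplicityVectors.mp hz)).trans (hjoint z)
  rw [hmarginal, hjoint, sum_multiplicityVectors_poissonWeight θ le_rfl,
    mul_div_mul_left _ _ hE, div_div_eq_mul_div, poissonWeight]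
  ring

/-- Watterson's conditioning representation: if `Z_1, …, Z_n` are independent with
`Z_j ~ Poisson(θ/j)`, then the conditional distribution of `(Z_1, …, Z_n)` given
`∑ j·Z_j = n` is the Ewens Sampling Formula ESF(θ):  for every `c` with `∑ j·c_j = n`,
`P[Z = c ∧ T = n] / P[T = n] = (n!/θ_(n)) ∏_j (θ/j)^{c_j}/c_j!`. -/
theorem watterson_conditioning (θ : ℝ) (hθ : 0 < θ) (n : ℕ) (hn : 1 ≤ n)
    (c : Fin n → ℕ) (hc : (∑ j : Fin n, (j.1 + 1) * c j) = n) :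
    (∏ j : Fin n, Real.exp (-(θ / (j.1 + 1))) * (θ / (j.1 + 1)) ^ c j
        / (Nat.factorial (c j))) /
      (∑' z : Fin n → ℕ,
        (if (∑ j : Fin n, (j.1 + 1) * z j) = n then
          ∏ j : Fin n, Real.exp (-(θ / (j.1 + 1))) * (θ / (j.1 + 1)) ^ z j
            / (Nat.factorial (z j))
        else 0))
      = ((Nat.factorial n : ℝ) / ∏ i ∈ range n, (θ + i)) *
          ∏ j : Fin n, (θ / (j.1 + 1)) ^ c j / (Nat.factorial (c j)) :=
  watterson_conditioning_general θ n c
end
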